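/- Fix ω > 0 and β ∈ (0, 2/3), and for each h > 0 set ħ = h²ω² and let (x_n(h), v_n(h)) be the trapezoidal barrier recursion with x₀ = βh, v₀ = −1. Then as h → ∞: v₁(h) → 1 − 2β, v₂(h) → 3 − 4β, and x₂(h)/h → 2 − 3β; moreover for all sufficiently large h one has x₁(h) < 0 and x₂(h) > 0, so the particle exits the barrier after two steps with limiting exit velocity 3 − 4β (which differs from the correct value 1 except at β = 1/2, so the trapezoidal method fails to preserve the particle's speed through a stiff collision). -/

import Mathlib

open Filter

/-- The trapezoidal scheme for a unit-mass particle against the one-sided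
quadratic barrier `P(x) = (1/2)ω²x²` for `x < 0`, `P(x) = 0` for `x ≥ 0`, with
time step `h`, `ħ = h²ω²`, collision phase `β`, initial data `x₀ = βh`,
`v₀ = −1`: `c_n = x_n + h v_n − (ħ/4)·min(x_n,0)`; `x_{n+1} = c_n` if `c_n ≥ 0`,
else `c_n/(1+ħ/4)`; and `v_{n+1} = v_n − (h/2)ω²·(min(x_n,0) + min(x_{n+1},0))`. -/
noncomputable def trapseq (ω h β : ℝ) : ℕ → ℝ × ℝ
  | 0 => (β * h, -1)
  | n + 1 =>
    let p := trapseq ω h β n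
    let c := p.1 + h * p.2 - (h ^ 2 * ω ^ 2 / 4) * min p.1 0
    let x' := if 0 ≤ c then c else c / (1 + h ^ 2 * ω ^ 2 / 4)
    (x', p.2 - (h / 2) * ω ^ 2 * (min p.1 0 + min x' 0))

/-- For phase `β ∈ (0, 2/3)`, in the large time-step limit `h → ∞` the
trapezoidal scheme resolves the collision in two steps with `v₁ → 1−2β`,
`v₂ → 3−4β` and `x₂/h → 2−3β`, eventually satisfying `x₁ < 0` and `x₂ > 0`;
the limiting exit velocity `3−4β` differs from the correct value `1` except at
`β = 1/2`. -/
theorem trapezoidal_barrier_large_timestep_early_phase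
    (ω β : ℝ) (hω : 0 < ω) (hβ0 : 0 < β) (hβ1 : β < 2 / 3) :
    Tendsto (fun h : ℝ => (trapseq ω h β 1).2) atTop (nhds (1 - 2 * β)) ∧
    Tendsto (fun h : ℝ => (trapseq ω h β 2).2) atTop (nhds (3 - 4 * β)) ∧
    Tendsto (fun h : ℝ => (trapseq ω h β 2).1 / h) atTop (nhds (2 - 3 * β)) ∧
    (∀ᶠ h : ℝ in atTop, (trapseq ω h β 1).1 < 0 ∧ 0 < (trapseq ω h β 2).1) := by
  have hq : Tendsto (fun h : ℝ => h ^ 2 * ω ^ 2 / 4) atTop atTop := by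
    apply Tendsto.atTop_div_const (by norm_num : (0:ℝ) < 4)
    exact (tendsto_pow_atTop two_ne_zero).atTop_mul_const (by positivity)
  have hD : Tendsto (fun h : ℝ => 1 + h ^ 2 * ω ^ 2 / 4) atTop atTop :=
    tendsto_atTop_add_const_left _ 1 hq
  have hinv : Tendsto (fun h : ℝ => (1 + h ^ 2 * ω ^ 2 / 4)⁻¹) atTop (nhds 0) :=
    hD.inv_tendsto_atTop
  have hr : Tendsto (fun h : ℝ => (h ^ 2 * ω ^ 2 / 4) / (1 + h ^ 2 * ω ^ 2 / 4))
      atTop (nhds 1) := by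
    have : Tendsto (fun h : ℝ => 1 - (1 + h ^ 2 * ω ^ 2 / 4)⁻¹) atTop (nhds (1 - 0)) :=
      tendsto_const_nhds.sub hinv
    rw [sub_zero] at this
    refine this.congr' ?_
    filter_upwards [eventually_gt_atTop 0] with h hh
    have hDpos : (0:ℝ) < 1 + h ^ 2 * ω ^ 2 / 4 := by positivity
    field_simp; ring
  have key : ∀ᶠ h : ℝ in atTop,
      trapseq ω h β 1 = ((β - 1) * h / (1 + h ^ 2 * ω ^ 2 / 4),
        -1 + 2 * (1 - β) * ((h ^ 2 * ω ^ 2 / 4) / (1 + h ^ 2 * ω ^ 2 / 4))) ∧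
      trapseq ω h β 2 = (h * ((β - 2) + (h ^ 2 * ω ^ 2 / 4) * (2 - 3 * β)) / (1 + h ^ 2 * ω ^ 2 / 4),
        -1 + 4 * (1 - β) * ((h ^ 2 * ω ^ 2 / 4) / (1 + h ^ 2 * ω ^ 2 / 4))) := by
    filter_upwards [eventually_gt_atTop 0, hq.eventually_gt_atTop ((2 - β) / (2 - 3 * β))]
      with h hh hc
    have hDpos : (0:ℝ) < 1 + h ^ 2 * ω ^ 2 / 4 := by positivity
    have h23 : (0:ℝ) < 2 - 3 * β := by linarith
    have hc' : 2 - β < (h ^ 2 * ω ^ 2 / 4) * (2 - 3 * β) := by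
      rw [div_lt_iff₀ h23] at hc; linarith
    have e1 : trapseq ω h β 1 = ((β - 1) * h / (1 + h ^ 2 * ω ^ 2 / 4),
        -1 + 2 * (1 - β) * ((h ^ 2 * ω ^ 2 / 4) / (1 + h ^ 2 * ω ^ 2 / 4))) := by
      conv_lhs => simp only [trapseq]
      simp only [min_eq_right (by positivity : (0:ℝ) ≤ β * h), mul_zero, sub_zero]
      rw [if_neg (by nlinarith : ¬ (0:ℝ) ≤ β * h + h * -1),
        min_eq_left (le_of_lt (div_neg_of_neg_of_pos (by nlinarith) hDpos))]
      rw [Prod.mk.injEq]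
      constructor
      · field_simp; ring
      · field_simp; ring
    refine ⟨e1, ?_⟩
    have hx1le : (β - 1) * h / (1 + h ^ 2 * ω ^ 2 / 4) ≤ 0 :=
      le_of_lt (div_neg_of_neg_of_pos (by nlinarith) hDpos)
    have hcval : (β - 1) * h / (1 + h ^ 2 * ω ^ 2 / 4)
        + h * (-1 + 2 * (1 - β) * ((h ^ 2 * ω ^ 2 / 4) / (1 + h ^ 2 * ω ^ 2 / 4)))
        - h ^ 2 * ω ^ 2 / 4 * ((β - 1) * h / (1 + h ^ 2 * ω ^ 2 / 4))
        = h * ((β - 2) + (h ^ 2 * ω ^ 2 / 4) * (2 - 3 * β)) / (1 + h ^ 2 * ω ^ 2 / 4) := by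
      field_simp
      ring
    have hc1pos : 0 < h * ((β - 2) + (h ^ 2 * ω ^ 2 / 4) * (2 - 3 * β)) / (1 + h ^ 2 * ω ^ 2 / 4) :=
      div_pos (mul_pos hh (by linarith)) hDpos
    conv_lhs => rw [show (2:ℕ) = 1 + 1 from rfl, trapseq]
    rw [e1]
    simp only
    rw [min_eq_left hx1le, hcval, if_pos hc1pos.le, min_eq_right hc1pos.le]
    rw [Prod.mk.injEq]
    constructor
    · rfl
    · field_simp; ring
  constructor
  · have t1 : Tendsto (fun h : ℝ => -1 + 2 * (1 - β) *
        ((h ^ 2 * ω ^ 2 / 4) / (1 + h ^ 2 * ω ^ 2 / 4))) atTop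
        (nhds (-1 + 2 * (1 - β) * 1)) := ((hr.const_mul _).const_add _)
    have heq : -1 + 2 * (1 - β) * 1 = 1 - 2 * β := by ring
    rw [heq] at t1
    refine t1.congr' ?_
    filter_upwards [key] with h hk
    rw [hk.1]
  refine ⟨?_, ?_, ?_⟩
  · have t2 : Tendsto (fun h : ℝ => -1 + 4 * (1 - β) *
        ((h ^ 2 * ω ^ 2 / 4) / (1 + h ^ 2 * ω ^ 2 / 4))) atTop
        (nhds (-1 + 4 * (1 - β) * 1)) := ((hr.const_mul _).const_add _)
    have heq : -1 + 4 * (1 - β) * 1 = 3 - 4 * β := by ring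
    rw [heq] at t2
    refine t2.congr' ?_
    filter_upwards [key] with h hk
    rw [hk.2]
  · have t3 : Tendsto (fun h : ℝ => (β - 2) * (1 + h ^ 2 * ω ^ 2 / 4)⁻¹ +
        (2 - 3 * β) * ((h ^ 2 * ω ^ 2 / 4) / (1 + h ^ 2 * ω ^ 2 / 4))) atTop
        (nhds ((β - 2) * 0 + (2 - 3 * β) * 1)) := (hinv.const_mul _).add (hr.const_mul _)
    have heq : (β - 2) * 0 + (2 - 3 * β) * 1 = 2 - 3 * β := by ring
    rw [heq] at t3
    refine t3.congr' ?_
    filter_upwards [key, eventually_gt_atTop 0] with h hk hh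
    rw [hk.2]
    have hDpos : (0:ℝ) < 1 + h ^ 2 * ω ^ 2 / 4 := by positivity
    field_simp
  · filter_upwards [key, eventually_gt_atTop 0,
      hq.eventually_gt_atTop ((2 - β) / (2 - 3 * β))] with h hk hh hc
    have hDpos : (0:ℝ) < 1 + h ^ 2 * ω ^ 2 / 4 := by positivity
    have h23 : (0:ℝ) < 2 - 3 * β := by linarith
    have hc' : 2 - β < (h ^ 2 * ω ^ 2 / 4) * (2 - 3 * β) := by
      rw [div_lt_iff₀ h23] at hc; linarith
    constructor
    · rw [hk.1]
      exact div_neg_of_neg_of_pos (by nlinarith) hDpos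
    · rw [hk.2]
      exact div_pos (mul_pos hh (by linarith)) hDpos
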